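/- arXiv:2003.11079 — 2 statements merged into one kernel-verified Lean document; each statement's English description precedes it below -/
import Mathlib

section
/- Let a ≤ m ≤ b be real numbers and let F : ℝ → ℝ be monotone nondecreasing, convex on [a, m] and concave on [m, b] (a unimodal distribution function on [a, b] with mode m). Let a ≤ a' ≤ b' ≤ b with F(a') < F(b'), and define the conditional distribution function H : ℝ → ℝ by H(x) = (F(x) − F(a')) / (F(b') − F(a')). Then there exists m' ∈ [a', b'] such that H is convex on [a', m'] and concave on [m', b']; in fact one may take m' = min(max(m, a'), b'). -/
private lemma affine_convexOn {s : Set ℝ} {F : ℝ → ℝ} {c d : ℝ} (hd : 0 < d)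
    (h : ConvexOn ℝ s F) : ConvexOn ℝ s (fun x => (F x - c) / d) := by
  have : ConvexOn ℝ s (fun x => d⁻¹ • (F x - c)) :=
    ((h.sub (concaveOn_const c h.1)).smul (by positivity))
  simpa [smul_eq_mul, div_eq_inv_mul] using this

private lemma affine_concaveOn {s : Set ℝ} {F : ℝ → ℝ} {c d : ℝ} (hd : 0 < d)
    (h : ConcaveOn ℝ s F) : ConcaveOn ℝ s (fun x => (F x - c) / d) := by
  have : ConcaveOn ℝ s (fun x => d⁻¹ • (F x - c)) :=
    ((h.sub (convexOn_const c h.1)).smul (by positivity))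
  simpa [smul_eq_mul, div_eq_inv_mul] using this

/-- Theorem 2 of the paper (distribution-function form): conditioning a
unimodal distribution function `F` (convex on `[a, m]`, concave on `[m, b]`)
on a subinterval `[a', b']` yields again a unimodal distribution function
`H x = (F x - F a') / (F b' - F a')`, with mode `m' = min (max m a') b'`. -/
theorem conditional_cdf_unimodal
    (a m b : ℝ) (ham : a ≤ m) (hmb : m ≤ b)
    (F : ℝ → ℝ) (hFmono : Monotone F)
    (hconv : ConvexOn ℝ (Set.Icc a m) F) (hconc : ConcaveOn ℝ (Set.Icc m b) F)
    (a' b' : ℝ) (haa' : a ≤ a') (ha'b' : a' ≤ b') (hb'b : b' ≤ b)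
    (hFlt : F a' < F b')
    (H : ℝ → ℝ) (hH : ∀ x, H x = (F x - F a') / (F b' - F a')) :
    ∃ m' ∈ Set.Icc a' b',
      ConvexOn ℝ (Set.Icc a' m') H ∧ ConcaveOn ℝ (Set.Icc m' b') H ∧
      m' = min (max m a') b' := by
  have hd : 0 < F b' - F a' := sub_pos.2 hFlt
  have hHeq : H = fun x => (F x - F a') / (F b' - F a') := funext hH
  refine ⟨min (max m a') b', ⟨le_min (le_max_right _ _) ha'b', min_le_right _ _⟩,
    ?_, ?_, rfl⟩ <;> rw [hHeq]
  · -- convex on [a', m']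
    apply affine_convexOn hd
    rcases le_total m a' with h | h
    · rw [max_eq_right h, min_eq_left ha'b', Set.Icc_self]
      refine ⟨convex_singleton a', fun x hx y hy p q hp hq hpq => ?_⟩
      simp only [Set.mem_singleton_iff] at hx hy
      subst hx; subst hy
      have hy : p * y + q * y = y := by linear_combination y * hpq
      have hf : p * F y + q * F y = F y := by linear_combination (F y) * hpq
      simp only [smul_eq_mul, hy, hf, le_refl]
    · rw [max_eq_left h]
      rcases le_total m b' with h2 | h2
      · rw [min_eq_left h2]
        exact hconv.subset (Set.Icc_subset_Icc haa' le_rfl) (convex_Icc _ _)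
      · rw [min_eq_right h2]
        exact hconv.subset (Set.Icc_subset_Icc haa' h2) (convex_Icc _ _)
  · -- concave on [m', b']
    apply affine_concaveOn hd
    rcases le_total m a' with h | h
    · rw [max_eq_right h, min_eq_left ha'b']
      exact hconc.subset (Set.Icc_subset_Icc h hb'b) (convex_Icc _ _)
    · rw [max_eq_left h]
      rcases le_total m b' with h2 | h2
      · rw [min_eq_left h2]
        exact hconc.subset (Set.Icc_subset_Icc le_rfl hb'b) (convex_Icc _ _)
      · rw [min_eq_right h2, Set.Icc_self]
        refine ⟨convex_singleton b', fun x hx y hy p q hp hq hpq => ?_⟩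
        simp only [Set.mem_singleton_iff] at hx hy
        subst hx; subst hy
        have hy : p * y + q * y = y := by linear_combination y * hpq
        have hf : p * F y + q * F y = F y := by linear_combination (F y) * hpq
        simp only [smul_eq_mul, hy, hf, le_refl]
end

section
/- Let F : ℝ → ℝ be a cumulative distribution function, i.e., F is monotone nondecreasing, F(x) → 0 as x → −∞ and F(x) → 1 as x → +∞. Then there exist m ∈ ℝ and a function G : ℝ → ℝ that is monotone nondecreasing, tends to 0 at −∞ and to 1 at +∞, is convex on (−∞, m] and concave on [m, ∞), such that |F(x) − G(x)| ≤ 1/4 for all x ∈ ℝ. -/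
open Filter

private lemma convexOn_congr' {s : Set ℝ} {f g : ℝ → ℝ} (hf : ConvexOn ℝ s f)
    (h : Set.EqOn f g s) : ConvexOn ℝ s g := by
  refine ⟨hf.1, fun x hx y hy u v hu hv huv => ?_⟩
  rw [← h hx, ← h hy, ← h (hf.1 hx hy hu hv huv)]
  exact hf.2 hx hy hu hv huv

private lemma concaveOn_congr' {s : Set ℝ} {f g : ℝ → ℝ} (hf : ConcaveOn ℝ s f)
    (h : Set.EqOn f g s) : ConcaveOn ℝ s g := by
  refine ⟨hf.1, fun x hx y hy u v hu hv huv => ?_⟩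
  rw [← h hx, ← h hy, ← h (hf.1 hx hy hu hv huv)]
  exact hf.2 hx hy hu hv huv

private lemma affine_comb (p q x y u v : ℝ) (huv : u + v = 1) :
    p + q * (u * x + v * y) = u * (p + q * x) + v * (p + q * y) := by
  have : v = 1 - u := by linarith
  subst this; ring

private lemma convexOn_affine (p q : ℝ) : ConvexOn ℝ Set.univ (fun x => p + q * x) := by
  refine ⟨convex_univ, fun x _ y _ u v hu hv huv => ?_⟩
  simp only [smul_eq_mul]
  exact le_of_eq (affine_comb p q x y u v huv)

private lemma concaveOn_affine (p q : ℝ) : ConcaveOn ℝ Set.univ (fun x => p + q * x) := by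
  refine ⟨convex_univ, fun x _ y _ u v hu hv huv => ?_⟩
  simp only [smul_eq_mul]
  exact ge_of_eq (affine_comb p q x y u v huv)

private lemma convexOn_max0_affine (p q : ℝ) :
    ConvexOn ℝ Set.univ (fun x => max 0 (p + q * x)) :=
  (convexOn_const (0:ℝ) convex_univ).sup (convexOn_affine p q)

private lemma concaveOn_min1_affine (p q : ℝ) :
    ConcaveOn ℝ Set.univ (fun x => min 1 (p + q * x)) :=
  (concaveOn_const (1:ℝ) convex_univ).inf (concaveOn_affine p q)

private lemma convexOn_update_right (m c : ℝ) (f : ℝ → ℝ)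
    (hf : ConvexOn ℝ Set.univ f) (hc : f m ≤ c) :
    ConvexOn ℝ (Set.Iic m) (fun x => if x = m then c else f x) := by
  refine ⟨convex_Iic m, ?_⟩
  intro x hx y hy u v hu hv huv
  simp only [smul_eq_mul]
  have hg : ∀ w, f w ≤ if w = m then c else f w := by
    intro w
    by_cases h : w = m
    · rw [if_pos h, h]; exact hc
    · rw [if_neg h]
  by_cases hz : u * x + v * y = m
  · have hx' : x ≤ m := hx
    have hy' : y ≤ m := hy
    have h1 : u * (m - x) + v * (m - y) = 0 := by linear_combination m * huv - hz
    have h2 : u * (m - x) = 0 := by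
      nlinarith [mul_nonneg hu (sub_nonneg.2 hx'), mul_nonneg hv (sub_nonneg.2 hy')]
    have h3 : v * (m - y) = 0 := by
      nlinarith [mul_nonneg hu (sub_nonneg.2 hx'), mul_nonneg hv (sub_nonneg.2 hy')]
    have hxc : u * (if x = m then c else f x) = u * c := by
      rcases mul_eq_zero.1 h2 with h | h
      · rw [h, zero_mul, zero_mul]
      · have hxm : x = m := by linarith
        rw [if_pos hxm]
    have hyc : v * (if y = m then c else f y) = v * c := by
      rcases mul_eq_zero.1 h3 with h | h
      · rw [h, zero_mul, zero_mul]
      · have hym : y = m := by linarith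
        rw [if_pos hym]
    rw [if_pos hz, hxc, hyc, ← add_mul, huv, one_mul]
  · rw [if_neg hz]
    calc f (u * x + v * y) ≤ u * f x + v * f y := by
          have := hf.2 (Set.mem_univ x) (Set.mem_univ y) hu hv huv
          simpa [smul_eq_mul] using this
      _ ≤ u * (if x = m then c else f x) + v * (if y = m then c else f y) :=
          add_le_add (mul_le_mul_of_nonneg_left (hg x) hu)
            (mul_le_mul_of_nonneg_left (hg y) hv)

private lemma concaveOn_update_left (m c : ℝ) (f : ℝ → ℝ)
    (hf : ConcaveOn ℝ Set.univ f) (hc : c ≤ f m) :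
    ConcaveOn ℝ (Set.Ici m) (fun x => if x = m then c else f x) := by
  refine ⟨convex_Ici m, ?_⟩
  intro x hx y hy u v hu hv huv
  simp only [smul_eq_mul]
  have hg : ∀ w, (if w = m then c else f w) ≤ f w := by
    intro w
    by_cases h : w = m
    · rw [if_pos h, h]; exact hc
    · rw [if_neg h]
  by_cases hz : u * x + v * y = m
  · have hx' : m ≤ x := hx
    have hy' : m ≤ y := hy
    have h1 : u * (x - m) + v * (y - m) = 0 := by linear_combination hz - m * huv
    have h2 : u * (x - m) = 0 := by
      nlinarith [mul_nonneg hu (sub_nonneg.2 hx'), mul_nonneg hv (sub_nonneg.2 hy')]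
    have h3 : v * (y - m) = 0 := by
      nlinarith [mul_nonneg hu (sub_nonneg.2 hx'), mul_nonneg hv (sub_nonneg.2 hy')]
    have hxc : u * (if x = m then c else f x) = u * c := by
      rcases mul_eq_zero.1 h2 with h | h
      · rw [h, zero_mul, zero_mul]
      · have hxm : x = m := by linarith
        rw [if_pos hxm]
    have hyc : v * (if y = m then c else f y) = v * c := by
      rcases mul_eq_zero.1 h3 with h | h
      · rw [h, zero_mul, zero_mul]
      · have hym : y = m := by linarith
        rw [if_pos hym]
    rw [if_pos hz, hxc, hyc, ← add_mul, huv, one_mul]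
  · rw [if_neg hz]
    calc u * (if x = m then c else f x) + v * (if y = m then c else f y)
        ≤ u * f x + v * f y :=
          add_le_add (mul_le_mul_of_nonneg_left (hg x) hu)
            (mul_le_mul_of_nonneg_left (hg y) hv)
      _ ≤ f (u * x + v * y) := by
          have := hf.2 (Set.mem_univ x) (Set.mem_univ y) hu hv huv
          simpa [smul_eq_mul] using this

set_option maxHeartbeats 1600000 in
/-- For every cumulative distribution function `F` there is a unimodal
distribution function `G` (convex on `(-∞, m]`, concave on `[m, ∞)` for some
mode `m`, nondecreasing, with limits `0` at `-∞` and `1` at `+∞`) within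
uniform distance `1/4` of `F`; i.e. the dip statistic is at most `1/4`. -/
theorem exists_unimodal_cdf_within_quarter
    (F : ℝ → ℝ) (hFmono : Monotone F)
    (hFbot : Tendsto F atBot (nhds 0)) (hFtop : Tendsto F atTop (nhds 1)) :
    ∃ (m : ℝ) (G : ℝ → ℝ), Monotone G ∧
      Tendsto G atBot (nhds 0) ∧ Tendsto G atTop (nhds 1) ∧
      ConvexOn ℝ (Set.Iic m) G ∧ ConcaveOn ℝ (Set.Ici m) G ∧
      ∀ x, |F x - G x| ≤ 1 / 4 := by
  -- F takes values in [0,1]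
  have hF0 : ∀ x, 0 ≤ F x := fun x =>
    le_of_tendsto hFbot (eventually_atBot.2 ⟨x, fun y hy => hFmono hy⟩)
  have hF1 : ∀ x, F x ≤ 1 := fun x =>
    ge_of_tendsto hFtop (eventually_atTop.2 ⟨x, fun y hy => hFmono hy⟩)
  -- quantile sets
  have hS1ne : {x : ℝ | (1:ℝ)/4 < F x}.Nonempty := by
    obtain ⟨x, hx⟩ := (hFtop.eventually (eventually_gt_nhds (by norm_num : (1:ℝ)/4 < 1))).exists
    exact ⟨x, hx⟩
  have hS2ne : {x : ℝ | (1:ℝ)/2 < F x}.Nonempty := by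
    obtain ⟨x, hx⟩ := (hFtop.eventually (eventually_gt_nhds (by norm_num : (1:ℝ)/2 < 1))).exists
    exact ⟨x, hx⟩
  have hTne : {x : ℝ | F x < 3/4}.Nonempty := by
    obtain ⟨x, hx⟩ := (hFbot.eventually (eventually_lt_nhds (by norm_num : (0:ℝ) < 3/4))).exists
    exact ⟨x, hx⟩
  have hS1bdd : BddBelow {x : ℝ | (1:ℝ)/4 < F x} := by
    obtain ⟨N, hN⟩ := eventually_atBot.1
      (hFbot.eventually (eventually_lt_nhds (by norm_num : (0:ℝ) < 1/4)))
    exact ⟨N, fun x hx => le_of_not_gt fun h => by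
      simp only [Set.mem_setOf_eq] at hx; linarith [hN x h.le]⟩
  have hS2bdd : BddBelow {x : ℝ | (1:ℝ)/2 < F x} := by
    obtain ⟨N, hN⟩ := eventually_atBot.1
      (hFbot.eventually (eventually_lt_nhds (by norm_num : (0:ℝ) < 1/2)))
    exact ⟨N, fun x hx => le_of_not_gt fun h => by
      simp only [Set.mem_setOf_eq] at hx; linarith [hN x h.le]⟩
  have hTbdd : BddAbove {x : ℝ | F x < 3/4} := by
    obtain ⟨N, hN⟩ := eventually_atTop.1
      (hFtop.eventually (eventually_gt_nhds (by norm_num : (3:ℝ)/4 < 1)))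
    exact ⟨N, fun x hx => le_of_not_gt fun h => by
      simp only [Set.mem_setOf_eq] at hx; linarith [hN x h.le]⟩
  obtain ⟨a, hadef⟩ : ∃ a : ℝ, a = sInf {x : ℝ | (1:ℝ)/4 < F x} := ⟨_, rfl⟩
  obtain ⟨m, hmdef⟩ : ∃ m : ℝ, m = sInf {x : ℝ | (1:ℝ)/2 < F x} := ⟨_, rfl⟩
  obtain ⟨b, hbdef⟩ : ∃ b : ℝ, b = sSup {x : ℝ | F x < 3/4} := ⟨_, rfl⟩
  -- quantile facts
  have h_lt_a : ∀ x, x < a → F x ≤ 1/4 := by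
    intro x hx
    by_contra h
    have : a ≤ x := hadef ▸ csInf_le hS1bdd (by simp only [Set.mem_setOf_eq]; linarith [lt_of_not_ge h])
    linarith
  have h_gt_a : ∀ x, a < x → 1/4 ≤ F x := by
    intro x hx
    obtain ⟨y, hy, hyx⟩ := exists_lt_of_csInf_lt hS1ne (hadef ▸ hx)
    exact le_trans (le_of_lt hy) (hFmono hyx.le)
  have h_lt_m : ∀ x, x < m → F x ≤ 1/2 := by
    intro x hx
    by_contra h
    have : m ≤ x := hmdef ▸ csInf_le hS2bdd (by simp only [Set.mem_setOf_eq]; linarith [lt_of_not_ge h])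
    linarith
  have h_gt_m : ∀ x, m < x → 1/2 ≤ F x := by
    intro x hx
    obtain ⟨y, hy, hyx⟩ := exists_lt_of_csInf_lt hS2ne (hmdef ▸ hx)
    exact le_trans (le_of_lt hy) (hFmono hyx.le)
  have h_lt_b : ∀ x, x < b → F x ≤ 3/4 := by
    intro x hx
    obtain ⟨y, hy, hxy⟩ := exists_lt_of_lt_csSup hTne (hbdef ▸ hx)
    exact le_trans (hFmono hxy.le) (le_of_lt hy)
  have h_gt_b : ∀ x, b < x → 3/4 ≤ F x := by
    intro x hx
    by_contra h
    have : x ≤ b := hbdef ▸ le_csSup hTbdd (by simp only [Set.mem_setOf_eq]; linarith [lt_of_not_ge h])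
    linarith
  have ham : a ≤ m := by
    rw [hadef, hmdef]
    exact csInf_le_csInf hS1bdd hS2ne (fun x hx => by
      simp only [Set.mem_setOf_eq] at *; linarith)
  have hmb : m ≤ b := by
    by_contra h
    push_neg at h
    obtain ⟨x, hbx, hxm⟩ := exists_between h
    linarith [h_lt_m x hxm, h_gt_b x hbx]
  obtain ⟨s, hsdef⟩ : ∃ s : ℝ, s = 1/(4*(1+(m-a))) := ⟨_, rfl⟩
  obtain ⟨t, htdef⟩ : ∃ t : ℝ, t = 1/(4*(1+(b-m))) := ⟨_, rfl⟩
  have hd1 : 0 ≤ m - a := by linarith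
  have hd2 : 0 ≤ b - m := by linarith
  have hden1 : (0:ℝ) < 4*(1+(m-a)) := by linarith
  have hden2 : (0:ℝ) < 4*(1+(b-m)) := by linarith
  have hs : 0 < s := by rw [hsdef]; positivity
  have ht : 0 < t := by rw [htdef]; positivity
  have hs1 : s * (1 + (m-a)) = 1/4 := by
    rw [hsdef]; field_simp
  have ht1 : t * (1 + (b-m)) = 1/4 := by
    rw [htdef]; field_simp
  have hs1' : s + s * (m-a) = 1/4 := by linear_combination hs1
  have ht1' : t + t * (b-m) = 1/4 := by linear_combination ht1
  have hsd1 : s * (m-a) ≤ 1/4 := by linarith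
  have htd2 : t * (b-m) ≤ 1/4 := by linarith
  have hsd1' : 0 ≤ s * (m-a) := mul_nonneg hs.le hd1
  have htd2' : 0 ≤ t * (b-m) := mul_nonneg ht.le hd2
  obtain ⟨L, hLdef⟩ : ∃ L : ℝ, L = 1/4 + s * (m-a) := ⟨_, rfl⟩
  obtain ⟨R, hRdef⟩ : ∃ R : ℝ, R = 3/4 - t * (b-m) := ⟨_, rfl⟩
  have hL1 : 1/4 ≤ L := by rw [hLdef]; linarith
  have hL2 : L ≤ 1/2 := by rw [hLdef]; linarith
  have hR1 : 1/2 ≤ R := by rw [hRdef]; linarith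
  have hR2 : R ≤ 3/4 := by rw [hRdef]; linarith
  have hLR : L ≤ R := le_trans hL2 hR1
  obtain ⟨f1, hf1def⟩ : ∃ f1 : ℝ → ℝ, f1 = fun x => max 0 (1/4 + s * (x - a)) := ⟨_, rfl⟩
  obtain ⟨f2, hf2def⟩ : ∃ f2 : ℝ → ℝ, f2 = fun x => min 1 (3/4 + t * (x - b)) := ⟨_, rfl⟩
  obtain ⟨c, hcdef⟩ : ∃ c : ℝ, c = max L (min (F m) R) := ⟨_, rfl⟩
  have hcL : L ≤ c := by rw [hcdef]; exact le_max_left _ _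
  have hcR : c ≤ R := by rw [hcdef]; exact max_le hLR (min_le_right _ _)
  obtain ⟨G, hGdef⟩ : ∃ G : ℝ → ℝ,
      G = fun x => if x < m then f1 x else if x = m then c else f2 x := ⟨_, rfl⟩
  -- values of f1, f2
  have hf1m : f1 m = L := by
    rw [hf1def, hLdef]
    simp only
    exact max_eq_right (by linarith)
  have hf2m : f2 m = R := by
    rw [hf2def, hRdef]
    simp only
    have h : 3/4 + t * (m - b) = 3/4 - t * (b - m) := by ring
    rw [h]
    exact min_eq_right (by linarith)
  have hf1mono : Monotone f1 := by
    intro u v huv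
    rw [hf1def]
    have h2 : s * (u - a) ≤ s * (v - a) := mul_le_mul_of_nonneg_left (by linarith) hs.le
    exact max_le_max le_rfl (by linarith)
  have hf2mono : Monotone f2 := by
    intro u v huv
    rw [hf2def]
    have h2 : t * (u - b) ≤ t * (v - b) := mul_le_mul_of_nonneg_left (by linarith) ht.le
    exact min_le_min le_rfl (by linarith)
  have hf1le : ∀ x, x ≤ m → f1 x ≤ L := fun x hx => hf1m ▸ hf1mono hx
  have hf2ge : ∀ x, m ≤ x → R ≤ f2 x := fun x hx => hf2m ▸ hf2mono hx
  have hf1nonneg : ∀ x, 0 ≤ f1 x := fun x => by rw [hf1def]; exact le_max_left _ _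
  have hf2le1 : ∀ x, f2 x ≤ 1 := fun x => by rw [hf2def]; exact min_le_left _ _
  -- G values
  have hGlt : ∀ x, x < m → G x = f1 x := fun x hx => by rw [hGdef]; simp [hx]
  have hGm : G m = c := by rw [hGdef]; simp
  have hGgt : ∀ x, m < x → G x = f2 x := fun x hx => by
    rw [hGdef]; simp [not_lt.2 hx.le, ne_of_gt hx]
  have hf1conv : ConvexOn ℝ Set.univ f1 := by
    refine convexOn_congr' (convexOn_max0_affine (1/4 - s*a) s) (fun x _ => ?_)
    rw [hf1def]
    simp only
    ring_nf
  have hf2conc : ConcaveOn ℝ Set.univ f2 := by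
    refine concaveOn_congr' (concaveOn_min1_affine (3/4 - t*b) t) (fun x _ => ?_)
    rw [hf2def]
    simp only
    ring_nf
  refine ⟨m, G, ?_, ?_, ?_, ?_, ?_, ?_⟩
  · -- Monotone
    intro x y hxy
    rcases lt_trichotomy x m with hx | hx | hx
    · rcases lt_trichotomy y m with hy | hy | hy
      · rw [hGlt x hx, hGlt y hy]; exact hf1mono hxy
      · rw [hGlt x hx, hy, hGm]; exact le_trans (hf1le x hx.le) hcL
      · rw [hGlt x hx, hGgt y hy]
        exact le_trans (hf1le x hx.le) (le_trans hLR (hf2ge y hy.le))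
    · rcases lt_trichotomy y m with hy | hy | hy
      · linarith
      · rw [hx, hy]
      · rw [hx, hGm, hGgt y hy]; exact le_trans hcR (hf2ge y hy.le)
    · have hy : m < y := lt_of_lt_of_le hx hxy
      rw [hGgt x hx, hGgt y hy]; exact hf2mono hxy
  · -- tendsto at bot
    have hev : ∀ᶠ x in atBot, G x = 0 := by
      rw [eventually_atBot]
      refine ⟨a - (1 + (m-a)), fun x hx => ?_⟩
      have hxm : x < m := by linarith
      rw [hGlt x hxm, hf1def]
      simp only
      have hkey : s * (x - a) ≤ s * (-(1 + (m-a))) :=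
        mul_le_mul_of_nonneg_left (by linarith) hs.le
      have h2 : s * (-(1 + (m-a))) = -(1/4) := by linear_combination -hs1
      exact max_eq_left (by linarith)
    exact Tendsto.congr' (by filter_upwards [hev] with x h using h.symm) tendsto_const_nhds
  · -- tendsto at top
    have hev : ∀ᶠ x in atTop, G x = 1 := by
      rw [eventually_atTop]
      refine ⟨b + (1 + (b-m)), fun x hx => ?_⟩
      have hxm : m < x := by linarith
      rw [hGgt x hxm, hf2def]
      simp only
      have hkey : t * (1 + (b-m)) ≤ t * (x - b) :=
        mul_le_mul_of_nonneg_left (by linarith) ht.le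
      exact min_eq_left (by linarith)
    exact Tendsto.congr' (by filter_upwards [hev] with x h using h.symm) tendsto_const_nhds
  · -- convex on Iic m
    have h1 := convexOn_update_right m c f1 hf1conv (hf1m ▸ hcL)
    refine convexOn_congr' h1 (fun x hx => ?_)
    rcases eq_or_lt_of_le (Set.mem_Iic.1 hx) with h | h
    · rw [if_pos h, h, hGm]
    · rw [if_neg (ne_of_lt h), hGlt x h]
  · -- concave on Ici m
    have h1 := concaveOn_update_left m c f2 hf2conc (hf2m ▸ hcR)
    refine concaveOn_congr' h1 (fun x hx => ?_)
    rcases eq_or_lt_of_le (Set.mem_Ici.1 hx) with h | h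
    · rw [if_pos h.symm, ← h, hGm]
    · rw [if_neg (ne_of_gt h), hGgt x h]
  · -- distance bound
    intro x
    rw [abs_le]
    rcases lt_trichotomy x m with hx | hx | hx
    · -- x < m
      rw [hGlt x hx]
      have hFx2 : F x ≤ 1/2 := h_lt_m x hx
      rcases lt_trichotomy x a with hxa | hxa | hxa
      · have hFx : F x ≤ 1/4 := h_lt_a x hxa
        have hub : f1 x ≤ 1/4 := by
          rw [hf1def]
          have h2 : s * (x - a) ≤ s * 0 := mul_le_mul_of_nonneg_left (by linarith) hs.le
          rw [mul_zero] at h2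
          exact max_le (by norm_num) (by linarith)
        constructor <;> linarith [hf1nonneg x, hF0 x]
      · have hval : f1 x = 1/4 := by
          rw [hf1def, hxa]
          simp only [sub_self, mul_zero, add_zero]
          exact max_eq_right (by norm_num)
        rw [hval]
        constructor <;> linarith [hF0 x]
      · have hFx : 1/4 ≤ F x := h_gt_a x hxa
        have hlb : 1/4 ≤ f1 x := by
          rw [hf1def]
          have h2 : 0 ≤ s * (x - a) := mul_nonneg hs.le (by linarith)
          exact le_trans (by linarith) (le_max_right _ _)
        have hub : f1 x ≤ 1/2 := le_trans (hf1le x hx.le) hL2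
        constructor <;> linarith
    · -- x = m
      rw [hx, hGm]
      rcases le_total (F m) L with h | h
      · have hc : c = L := by
          rw [hcdef, min_eq_left (le_trans h hLR), max_eq_left h]
        rw [hc]
        have hFge : s * (m-a) ≤ F m := by
          rcases eq_or_lt_of_le ham with he | he
          · rw [← he, sub_self, mul_zero]; exact hF0 _
          · linarith [h_gt_a m he]
        rw [hLdef]
        constructor <;> linarith
      · rcases le_total (F m) R with h' | h'
        · have hc : c = F m := by
            rw [hcdef, min_eq_left h', max_eq_right h]
          rw [hc]
          constructor <;> linarith
        · have hc : c = R := by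
            rw [hcdef, min_eq_right h', max_eq_right hLR]
          rw [hc]
          have hFle : F m ≤ 1 - t * (b-m) := by
            rcases eq_or_lt_of_le hmb with he | he
            · rw [he, sub_self, mul_zero]; linarith [hF1 b]
            · linarith [h_lt_b m he]
          rw [hRdef]
          constructor <;> linarith
    · -- m < x
      rw [hGgt x hx]
      have hFx2 : 1/2 ≤ F x := h_gt_m x hx
      rcases lt_trichotomy x b with hxb | hxb | hxb
      · have hFx : F x ≤ 3/4 := h_lt_b x hxb
        have hlb : 1/2 ≤ f2 x := le_trans hR1 (hf2ge x hx.le)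
        have hub : f2 x ≤ 3/4 := by
          rw [hf2def]
          have h2 : t * (x - b) ≤ t * 0 := mul_le_mul_of_nonneg_left (by linarith) ht.le
          rw [mul_zero] at h2
          exact le_trans (min_le_right _ _) (by linarith)
        constructor <;> linarith
      · have hval : f2 x = 3/4 := by
          rw [hf2def, hxb]
          simp only [sub_self, mul_zero, add_zero]
          exact min_eq_right (by norm_num)
        rw [hval]
        constructor <;> linarith [hF1 x]
      · have hFx : 3/4 ≤ F x := h_gt_b x hxb
        have hlb : 3/4 ≤ f2 x := by
          rw [hf2def]
          have h2 : 0 ≤ t * (x - b) := mul_nonneg ht.le (by linarith)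
          exact le_min (by norm_num) (by linarith)
        constructor <;> linarith [hf2le1 x, hF1 x]
end
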